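/- arXiv:2502.07745 — 2 statements merged into one kernel-verified Lean document; each statement's English description precedes it below -/
import Mathlib

section
/- For probability vectors P, Q on a finite set and a convex lower-semicontinuous function f with (0,∞) ⊆ dom f, the f-divergence satisfies the variational formula S_f(P‖Q) = sup over functions z : X → dom f* of ∑_x P(x)·z(x) − ∑_x Q(x)·f*(z(x)), where f* is the Fenchel conjugate of f. -/
/-!
Fenchel–Young gives `P z - Q f*(z) ≤ Q f(P/Q)` termwise, hence `≥` in the formula. Conversely,
`P/Q` is an interior point of `dom f`, on which `f` is a real convex function; the slope `z` of a
supporting line there (the right derivative) gives `f*(z) = (P/Q) z - f(P/Q)`, so the supremum is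
attained. If `f` takes the value `⊥` somewhere, convexity forces `f ≡ ⊥`, and the left
side is `⊥` unless `X` is empty.
-/

noncomputable section

/-- Fenchel conjugate `f*(z) = sup_{t ∈ dom f} (t z - f t)` of `f : ℝ → ℝ ∪ {+∞}`. -/
def fconj (f : ℝ → EReal) (z : ℝ) : EReal :=
  ⨆ (t : ℝ) (_ : f t ≠ ⊤), ((t * z : ℝ) : EReal) - f t

open Set

theorem ConvexOn.add_rightDeriv_mul_sub_le {S : Set ℝ} {g : ℝ → ℝ} {x y : ℝ}
    (hg : ConvexOn ℝ S g) (hx : x ∈ interior S) (hy : y ∈ S) :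
    g x + derivWithin g (Ioi x) x * (y - x) ≤ g y := by
  rcases lt_trichotomy x y with hxy | rfl | hyx
  · have h := hg.rightDeriv_le_slope_of_mem_interior hx hy hxy
    rw [slope_def_field, le_div_iff₀ (sub_pos.2 hxy)] at h
    linarith
  · simp
  · have h := (hg.slope_le_leftDeriv_of_mem_interior hy hx hyx).trans
      (hg.leftDeriv_le_rightDeriv_of_mem_interior hx)
    rw [slope_def_field, div_le_iff₀ (sub_pos.2 hyx)] at h
    linarith

theorem coe_mul_sub_le_fconj {f : ℝ → EReal} {t : ℝ} (ht : f t ≠ ⊤) (z : ℝ) :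
    ((t * z : ℝ) : EReal) - f t ≤ fconj f z :=
  le_iSup₂ (f := fun t (_ : f t ≠ ⊤) => ((t * z : ℝ) : EReal) - f t) t ht

theorem coe_mul_sub_mul_fconj_le {f : ℝ → EReal} {p q z : ℝ} (hq : 0 < q) (ht : f (p / q) ≠ ⊤)
    (hz : fconj f z ≠ ⊤) :
    ((p * z : ℝ) : EReal) - q * fconj f z ≤ q * f (p / q) := by
  have hFY := coe_mul_sub_le_fconj ht z
  have ha : f (p / q) ≠ ⊥ := fun h => hz (top_le_iff.1 (by rwa [h, EReal.coe_sub_bot] at hFY))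
  rw [← EReal.coe_toReal ht ha] at hFY ⊢
  have hb : fconj f z ≠ ⊥ :=
    ne_bot_of_le_ne_bot (by rw [← EReal.coe_sub]; exact EReal.coe_ne_bot _) hFY
  rw [← EReal.coe_toReal hz hb] at hFY ⊢
  norm_cast at hFY ⊢
  have := mul_le_mul_of_nonneg_left hFY hq.le
  field_simp at this
  linarith

def ConvexEReal (f : ℝ → EReal) : Prop :=
  ∀ a b θ : ℝ, 0 ≤ θ → θ ≤ 1 →
    f (θ * a + (1 - θ) * b) ≤ (θ : EReal) * f a + ((1 - θ : ℝ) : EReal) * f b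

namespace ConvexEReal

variable {f : ℝ → EReal}

theorem eq_bot (hf : ConvexEReal f) {c : ℝ} (hc : f c = ⊥) (t : ℝ) : f t = ⊥ := by
  -- `⊥ + x = ⊥` in `EReal`, even for `x = ⊤`
  have h := hf c (2 * t - c) (1 / 2) (by norm_num) (by norm_num)
  rwa [show (1 / 2 : ℝ) * c + (1 - 1 / 2) * (2 * t - c) = t by ring, hc,
    EReal.coe_mul_bot_of_pos (by norm_num), EReal.bot_add, le_bot_iff] at h

theorem convexOn_toReal (hf : ConvexEReal f) (hbot : ∀ t, f t ≠ ⊥) :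
    ConvexOn ℝ {t | f t ≠ ⊤} fun t => (f t).toReal := by
  have key : ∀ x ∈ {t | f t ≠ ⊤}, ∀ y ∈ {t | f t ≠ ⊤}, ∀ a b : ℝ, 0 ≤ a → 0 ≤ b → a + b = 1 →
      f (a • x + b • y) ≤ ((a • (f x).toReal + b • (f y).toReal : ℝ) : EReal) := by
    intro x hx y hy a b ha _ hab
    obtain rfl : b = 1 - a := by linarith
    have h := hf x y a ha (by linarith)
    rwa [← EReal.coe_toReal hx (hbot x), ← EReal.coe_toReal hy (hbot y), ← EReal.coe_mul,
      ← EReal.coe_mul, ← EReal.coe_add] at h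
  refine ⟨fun x hx y hy a b ha hb hab => ne_top_of_le_ne_top (EReal.coe_ne_top _)
    (key x hx y hy a b ha hb hab), fun x hx y hy a b ha hb hab => ?_⟩
  have h := EReal.toReal_le_toReal (key x hx y hy a b ha hb hab) (hbot _) (EReal.coe_ne_top _)
  rwa [EReal.toReal_coe] at h

theorem exists_fconj_eq (hf : ConvexEReal f) (hbot : ∀ t, f t ≠ ⊥) {t₀ : ℝ}
    (ht₀ : t₀ ∈ interior {t | f t ≠ ⊤}) :
    ∃ z, fconj f z = ((t₀ * z - (f t₀).toReal : ℝ) : EReal) := by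
  set z := derivWithin (fun t => (f t).toReal) (Ioi t₀) t₀
  refine ⟨z, le_antisymm (iSup₂_le fun t ht => ?_) ?_⟩
  · have := (hf.convexOn_toReal hbot).add_rightDeriv_mul_sub_le ht₀ ht
    rw [← EReal.coe_toReal ht (hbot t), ← EReal.coe_sub, EReal.coe_le_coe_iff]
    linear_combination this
  · have hmem := interior_subset ht₀
    have h := coe_mul_sub_le_fconj hmem z
    rwa [← EReal.coe_toReal hmem (hbot t₀), ← EReal.coe_sub] at h

theorem exists_coe_mul_sub_mul_fconj_eq (hf : ConvexEReal f) (hbot : ∀ t, f t ≠ ⊥) {p q : ℝ}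
    (hq : 0 < q) (hpq : p / q ∈ interior {t | f t ≠ ⊤}) :
    ∃ z, fconj f z ≠ ⊤ ∧ ((p * z : ℝ) : EReal) - q * fconj f z = q * f (p / q) := by
  obtain ⟨z, hz⟩ := hf.exists_fconj_eq hbot hpq
  refine ⟨z, hz ▸ EReal.coe_ne_top _, ?_⟩
  obtain ⟨a, ha⟩ : ∃ a : ℝ, f (p / q) = a :=
    ⟨_, (EReal.coe_toReal (interior_subset hpq) (hbot _)).symm⟩
  rw [hz, ha, EReal.toReal_coe]
  norm_cast
  field_simp
  ring

end ConvexEReal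

theorem fDivergence_variational_general {X : Type*} [Fintype X]
    (f : ℝ → EReal)
    (hconv : ∀ a b θ : ℝ, 0 ≤ θ → θ ≤ 1 →
      f (θ * a + (1 - θ) * b) ≤ (θ : EReal) * f a + ((1 - θ : ℝ) : EReal) * f b)
    (hdom : ∀ t : ℝ, 0 < t → f t ≠ ⊤)
    (P Q : X → ℝ) (hP : ∀ x, 0 < P x) (hQ : ∀ x, 0 < Q x) :
    ∑ x, (Q x : EReal) * f (P x / Q x) =
      ⨆ (z : X → ℝ) (_ : ∀ x, fconj f (z x) ≠ ⊤),
        ∑ x, (((P x * z x : ℝ) : EReal) - (Q x : EReal) * fconj f (z x)) := by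
  have hratio : ∀ x, 0 < P x / Q x := fun x => div_pos (hP x) (hQ x)
  refine le_antisymm ?_ (iSup₂_le fun z hz => Finset.sum_le_sum fun x _ =>
    coe_mul_sub_mul_fconj_le (hQ x) (hdom _ (hratio x)) (hz x))
  by_cases hbot : ∃ c, f c = ⊥
  · obtain ⟨c, hc⟩ := hbot
    rcases isEmpty_or_nonempty X with _ | ⟨⟨x₀⟩⟩
    · exact le_iSup₂_of_le 0 isEmptyElim (by simp)
    · have hsum : ∑ x, (Q x : EReal) * f (P x / Q x) = ⊥ :=
        WithBot.sum_eq_bot_iff.2 ⟨x₀, Finset.mem_univ _, by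
          rw [ConvexEReal.eq_bot hconv hc, EReal.coe_mul_bot_of_pos (hQ x₀)]; rfl⟩
      exact hsum ▸ bot_le
  · have hint : Ioi 0 ⊆ interior {t | f t ≠ ⊤} := isOpen_Ioi.subset_interior_iff.2 hdom
    choose z hz heq using fun x => ConvexEReal.exists_coe_mul_sub_mul_fconj_eq hconv
      (not_exists.1 hbot) (hQ x) (hint (hratio x))
    exact le_iSup₂_of_le z hz (Finset.sum_le_sum fun x _ => (heq x).ge)

/-- Variational formula for the classical `f`-divergence of strictly positive
probability vectors `P, Q` on a finite set:
`S_f(P‖Q) = sup_{z : X → dom f*} ∑_x P(x) z(x) - ∑_x Q(x) f*(z(x))`. -/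
theorem fDivergence_variational {X : Type*} [Fintype X]
    (f : ℝ → EReal)
    (hconv : ∀ a b θ : ℝ, 0 ≤ θ → θ ≤ 1 →
      f (θ * a + (1 - θ) * b) ≤ (θ : EReal) * f a + ((1 - θ : ℝ) : EReal) * f b)
    (hlsc : LowerSemicontinuous f)
    (hdom : ∀ t : ℝ, 0 < t → f t ≠ ⊤)
    (P Q : X → ℝ) (hP : ∀ x, 0 < P x) (hQ : ∀ x, 0 < Q x)
    (hPsum : ∑ x, P x = 1) (hQsum : ∑ x, Q x = 1) :
    ∑ x, (Q x : EReal) * f (P x / Q x) =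
      ⨆ (z : X → ℝ) (_ : ∀ x, fconj f (z x) ≠ ⊤),
        ∑ x, (((P x * z x : ℝ) : EReal) - (Q x : EReal) * fconj f (z x)) :=
  fDivergence_variational_general f hconv hdom P Q hP hQ

end
end

section
/- For any positive semidefinite ρ, σ with tr ρ = 1 and any c > 0, D_M(ρ‖σ/c) = D_M(ρ‖σ) + log c; consequently, for the support function h_C of a compact convex set C of positive semidefinite operators, sup_{ω ≻ 0} (−h_C(ω) − D_M(ρ‖ω) + 1) = sup_{ω ≻ 0, h_C(ω) ≤ 1} (−D_M(ρ‖ω)), using log x ≤ x − 1. -/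
/-!
Rescaling `σ ↦ σ / c` multiplies every outcome probability `tr[σ M_x]` by `c⁻¹`, which adds
`p_x log c` to each Kullback–Leibler term; as the `p_x` sum to `tr ρ = 1`, the measured relative
entropy shifts by `log c`. Since `h_C` is positively homogeneous, normalizing `ω` to `ω / h_C(ω)`
turns `-h_C(ω) - D_M(ρ‖ω) + 1` into `-D_M(ρ‖ω/h_C(ω)) + log h_C(ω) + 1 - h_C(ω)`, and
`log x ≤ x - 1` gives one inequality; the other is immediate from `h_C(ω) ≤ 1`.
-/

open Matrix
open scoped ComplexOrder

noncomputable section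

/-- Single Kullback-Leibler term `p log(p/q)` with the standard conventions. -/
def klQ (p q : ℝ) : EReal :=
  if p = 0 then 0 else if q = 0 then ⊤ else ((p * Real.log (p / q) : ℝ) : EReal)

/-- The measured relative entropy: supremum over POVMs of the classical
Kullback-Leibler divergence of the induced distributions. -/
def measKL {ι : Type*} [Fintype ι] [DecidableEq ι] (ρ σ : Matrix ι ι ℂ) : EReal :=
  ⨆ (m : ℕ) (M : Fin m → Matrix ι ι ℂ)
    (_ : (∀ x, (M x).PosSemidef) ∧ ∑ x, M x = 1),
      ∑ x, klQ ((ρ * M x).trace.re) ((σ * M x).trace.re)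

/-- Support function of a set of matrices. -/
def suppFun {ι : Type*} [Fintype ι] (C : Set (Matrix ι ι ℂ))
    (ω : Matrix ι ι ℂ) : ℝ :=
  sSup ((fun σ => (σ * ω).trace.re) '' C)

namespace EReal

lemma coe_finset_sum {α : Type*} (s : Finset α) (f : α → ℝ) :
    ((∑ i ∈ s, f i : ℝ) : EReal) = ∑ i ∈ s, (f i : EReal) :=
  map_sum (⟨⟨Real.toEReal, coe_zero⟩, coe_add⟩ : ℝ →+ EReal) f s

def addCoeOrderIso (c : ℝ) : EReal ≃o EReal where
  toFun x := x + c
  invFun x := x - c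
  left_inv _ := add_sub_cancel_right
  right_inv _ := sub_add_cancel
  map_rel_iff' := (addLECancellable_coe c).add_le_add_iff_right

lemma neg_coe_sub_add_one (D : EReal) (a : ℝ) :
    -(a : EReal) - D + 1 = -D + ((1 - a : ℝ) : EReal) := by
  rw [sub_eq_add_neg, add_comm _ (-D), add_assoc, ← coe_neg, ← coe_one, ← coe_add]
  ring_nf

lemma neg_le_neg_coe_sub_add_one (D : EReal) {a : ℝ} (ha : a ≤ 1) :
    -D ≤ -(a : EReal) - D + 1 := by
  rw [neg_coe_sub_add_one]
  simpa using add_le_add_right (EReal.coe_le_coe_iff.mpr (_root_.sub_nonneg.mpr ha)) (-D)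

lemma neg_coe_sub_add_one_le_neg_add_log (D : EReal) {a : ℝ} (ha : 0 < a) :
    -(a : EReal) - D + 1 ≤ -(D + (Real.log a : EReal)) := by
  rw [neg_coe_sub_add_one, neg_add (Or.inr (coe_ne_top _)) (Or.inr (coe_ne_bot _)),
    sub_eq_add_neg (-D), ← coe_neg]
  exact add_le_add_right (EReal.coe_le_coe_iff.mpr (by linarith [Real.log_le_sub_one_of_pos ha])) _

end EReal

lemma klQ_inv_mul (p q : ℝ) {c : ℝ} (hc : 0 < c) :
    klQ p (c⁻¹ * q) = klQ p q + ((p * Real.log c : ℝ) : EReal) := by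
  unfold klQ
  by_cases hp : p = 0
  · simp [hp]
  by_cases hq : q = 0
  · rw [if_neg hp, if_neg hp, hq, mul_zero, if_pos rfl, EReal.top_add_coe]
  have hcq : c⁻¹ * q ≠ 0 := mul_ne_zero (inv_ne_zero hc.ne') hq
  rw [if_neg hp, if_neg hp, if_neg hcq, if_neg hq, ← EReal.coe_add, div_mul_eq_div_div_swap,
    div_inv_eq_mul, Real.log_mul (div_ne_zero hp hq) hc.ne', mul_add]

lemma sum_klQ_inv_mul {α : Type*} [Fintype α] (p q : α → ℝ) (hp : ∑ x, p x = 1) {c : ℝ}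
    (hc : 0 < c) :
    ∑ x, klQ (p x) (c⁻¹ * q x) = ∑ x, klQ (p x) (q x) + (Real.log c : EReal) := by
  simp only [klQ_inv_mul _ _ hc, Finset.sum_add_distrib, ← EReal.coe_finset_sum,
    ← Finset.sum_mul, hp, one_mul]

lemma Matrix.sum_trace_mul_of_sum_eq_one {ι α : Type*} [Fintype ι] [DecidableEq ι] [Fintype α]
    (ρ : Matrix ι ι ℂ) {M : α → Matrix ι ι ℂ} (hM : ∑ x, M x = 1) :
    ∑ x, (ρ * M x).trace = ρ.trace := by
  rw [← Matrix.trace_sum, ← Finset.mul_sum, hM, mul_one]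

theorem measKL_inv_smul {ι : Type*} [Fintype ι] [DecidableEq ι] {ρ : Matrix ι ι ℂ}
    (hρ : ρ.trace = 1) (σ : Matrix ι ι ℂ) {c : ℝ} (hc : 0 < c) :
    measKL ρ ((c : ℂ)⁻¹ • σ) = measKL ρ σ + (Real.log c : EReal) := by
  -- translation by a real constant is an order isomorphism of `EReal`, so it commutes with `⨆`
  change _ = EReal.addCoeOrderIso (Real.log c) (measKL ρ σ)
  simp only [measKL, OrderIso.map_iSup]
  refine iSup_congr fun m => iSup_congr fun M => iSup_congr fun hM => ?_
  have hp : ∑ x, (ρ * M x).trace.re = 1 := by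
    rw [← Complex.re_sum, ρ.sum_trace_mul_of_sum_eq_one hM.2, hρ, Complex.one_re]
  have hq (x : Fin m) : ((c : ℂ)⁻¹ • σ * M x).trace.re = c⁻¹ * (σ * M x).trace.re := by
    rw [Matrix.smul_mul, Matrix.trace_smul, ← Complex.ofReal_inv, smul_eq_mul,
      Complex.re_ofReal_mul]
  simp only [hq]
  exact sum_klQ_inv_mul _ _ hp hc

lemma suppFun_smul_of_nonneg {ι : Type*} [Fintype ι] (C : Set (Matrix ι ι ℂ))
    (ω : Matrix ι ι ℂ) {r : ℝ} (hr : 0 ≤ r) :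
    suppFun C ((r : ℂ) • ω) = r * suppFun C ω := by
  rw [suppFun, suppFun, ← smul_eq_mul, ← Real.sSup_smul_of_nonneg hr, ← Set.image_smul,
    Set.image_image]
  congr 1
  refine Set.image_congr fun σ _ => ?_
  rw [Matrix.mul_smul, Matrix.trace_smul, smul_eq_mul, Complex.re_ofReal_mul, smul_eq_mul]

theorem measKL_scaling_and_normalization_general {ι : Type*} [Fintype ι] [DecidableEq ι]
    (ρ : Matrix ι ι ℂ) (hρtr : ρ.trace = 1)
    (C : Set (Matrix ι ι ℂ))
    (hCpos : ∀ ω : Matrix ι ι ℂ, ω.PosDef → 0 < suppFun C ω) :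
    (∀ (σ : Matrix ι ι ℂ), σ.PosSemidef → ∀ c : ℝ, 0 < c →
      measKL ρ (((c : ℂ)⁻¹) • σ) = measKL ρ σ + ((Real.log c : ℝ) : EReal)) ∧
    (⨆ (ω : Matrix ι ι ℂ) (_ : ω.PosDef),
        (-((suppFun C ω : ℝ) : EReal) - measKL ρ ω + 1)) =
      (⨆ (ω : Matrix ι ι ℂ) (_ : ω.PosDef ∧ suppFun C ω ≤ 1),
        -measKL ρ ω) := by
  refine ⟨fun σ _ c hc => measKL_inv_smul hρtr σ hc, le_antisymm ?_ ?_⟩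
  · refine iSup₂_le fun ω hω => ?_
    have hc := hCpos ω hω
    have hnorm : suppFun C ((suppFun C ω : ℂ)⁻¹ • ω) = 1 := by
      rw [← Complex.ofReal_inv, suppFun_smul_of_nonneg C ω (inv_nonneg.mpr hc.le),
        inv_mul_cancel₀ hc.ne']
    refine le_iSup₂_of_le _ ⟨hω.smul (inv_pos.mpr (by exact_mod_cast hc)), hnorm.le⟩ ?_
    rw [measKL_inv_smul hρtr ω hc]
    exact EReal.neg_coe_sub_add_one_le_neg_add_log _ hc
  · refine iSup₂_le fun ω ⟨hω, hω1⟩ => le_iSup₂_of_le ω hω ?_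
    exact EReal.neg_le_neg_coe_sub_add_one _ hω1

/-- Scaling property of the measured relative entropy,
`D_M(ρ‖σ/c) = D_M(ρ‖σ) + log c`, and its consequence for support functions:
`sup_{ω ≻ 0} (-h_C(ω) - D_M(ρ‖ω) + 1) = sup_{ω ≻ 0, h_C(ω) ≤ 1} (-D_M(ρ‖ω))`. -/
theorem measKL_scaling_and_normalization {ι : Type*} [Fintype ι] [DecidableEq ι]
    (ρ : Matrix ι ι ℂ) (hρ : ρ.PosSemidef) (hρtr : ρ.trace = 1)
    (C : Set (Matrix ι ι ℂ)) (hCpsd : ∀ σ ∈ C, σ.PosSemidef)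
    (hCcompact : IsCompact C) (hCconvex : Convex ℝ C)
    (hCpos : ∀ ω : Matrix ι ι ℂ, ω.PosDef → 0 < suppFun C ω) :
    (∀ (σ : Matrix ι ι ℂ), σ.PosSemidef → ∀ c : ℝ, 0 < c →
      measKL ρ (((c : ℂ)⁻¹) • σ) = measKL ρ σ + ((Real.log c : ℝ) : EReal)) ∧
    (⨆ (ω : Matrix ι ι ℂ) (_ : ω.PosDef),
        (-((suppFun C ω : ℝ) : EReal) - measKL ρ ω + 1)) =
      (⨆ (ω : Matrix ι ι ℂ) (_ : ω.PosDef ∧ suppFun C ω ≤ 1),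
        -measKL ρ ω) :=
  measKL_scaling_and_normalization_general ρ hρtr C hCpos

end
end
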